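/- For infinite-state communicating programs the weakest assumption need not be regular: with data domain D = ℤ, let M1 be the program with states q0 (initial) and q1 (accepting), a transition q0 —sync→ q1 and self-loops on q1 labeled by every letter; let P be the property with states r0 (initial, accepting), r1 (accepting), r2 (accepting), r3 (rejecting), transitions r0 —sync→ r1, r1 —(x=y)→ r2, r1 —(x≠y)→ r3, and self-loops on r2 and r3 labeled by every letter; and let αM2 = {x:=0, y:=0, x:=x+1, y:=y+1, sync}, where sync is a synchronization action common to M1 and the assumption. Then the weakest-assumption language L(A_w) = { w ∈ (αM2)* : M1 || w ⊨ P } is not regular. -/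

import Mathlib

/-!
Communicating programs (Frenkel, Grumberg, Păsăreanu, Sheinvald:
"Assume, Guarantee or Repair").

A communicating program is an automaton over an action alphabet consisting of
communication actions (reads `g?x`, writes `g!x`, and synchronized read/write
pairs), assignments `x := e`, and first-order constraints over valuations of
the program variables.
-/

open scoped Classical

namespace AGR

/-- A single (one-sided) communication action: a read `g?x` or a write `g!x`
of variable `x` over channel `g`. -/
inductive CommAct (Chan Var : Type) where
  | read  : Chan → Var → CommAct Chan Var
  | write : Chan → Var → CommAct Chan Var

namespace CommAct

variable {Chan Var : Type}

/-- The channel of a communication action. -/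
def chan : CommAct Chan Var → Chan
  | read g _ => g
  | write g _ => g

/-- The variable of a communication action. -/
def var : CommAct Chan Var → Var
  | read _ x => x
  | write _ x => x

end CommAct

/-- Two one-sided communication actions form a matching read/write pair:
one is a read and the other is a write, over the same channel. -/
def rwPair {Chan Var : Type} : CommAct Chan Var → CommAct Chan Var → Prop
  | CommAct.read g _, CommAct.write g' _ => g = g'
  | CommAct.write g _, CommAct.read g' _ => g = g'
  | _, _ => False

/-- Letters of the action alphabet of a communicating program over channels
`Chan`, variables `Var` and data domain `D`:
communication actions (single reads/writes and synchronized pairs),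
assignments `x := e`, and constraints (sets of valuations). -/
inductive Action (Chan Var D : Type) where
  | comm   : CommAct Chan Var → Action Chan Var D
  | sync   : CommAct Chan Var → CommAct Chan Var → Action Chan Var D
  | assign : Var → ((Var → D) → D) → Action Chan Var D
  | constr : Set (Var → D) → Action Chan Var D

namespace Action

variable {Chan Var D : Type}

/-- `a` is a communication action (a single read/write or a synchronized pair). -/
def isComm : Action Chan Var D → Prop
  | comm _ => True
  | sync _ _ => True
  | _ => False

/-- `a` is an assignment. -/
def isAssign : Action Chan Var D → Prop
  | assign _ _ => True
  | _ => False

/-- `a` is a constraint. -/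
def isConstraint : Action Chan Var D → Prop
  | constr _ => True
  | _ => False

/-- The channels occurring in an action. -/
def chans : Action Chan Var D → Set Chan
  | comm c => {c.chan}
  | sync c₁ c₂ => {c₁.chan, c₂.chan}
  | _ => ∅

/-- The action refers only to variables in `V`. -/
def usesOnly (V : Set Var) : Action Chan Var D → Prop
  | comm c => c.var ∈ V
  | sync c₁ c₂ => c₁.var ∈ V ∧ c₂.var ∈ V
  | assign x e => x ∈ V ∧ ∀ β β' : Var → D, (∀ y ∈ V, β y = β' y) → e β = e β'
  | constr c => ∀ β β' : Var → D, (∀ y ∈ V, β y = β' y) → (β ∈ c ↔ β' ∈ c)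

/-- The semantics of a single action on valuations:
`a.step β β'` holds when valuation `β'` may follow valuation `β` upon
performing `a`.  A read assigns an arbitrary value to the read variable;
a write changes nothing; a synchronized pair copies the written variable to
the read variable; an assignment updates the assigned variable; a constraint
leaves the valuation unchanged and must be satisfied by it. -/
def step : Action Chan Var D → (Var → D) → (Var → D) → Prop
  | comm (CommAct.read _ x) => fun β β' => ∀ y, y ≠ x → β' y = β y
  | comm (CommAct.write _ _) => fun β β' => β' = β
  | sync (CommAct.read _ x) (CommAct.write _ y) => fun β β' =>
      β' x = β y ∧ ∀ z, z ≠ x → β' z = β z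
  | sync (CommAct.write _ y) (CommAct.read _ x) => fun β β' =>
      β' x = β y ∧ ∀ z, z ≠ x → β' z = β z
  | sync _ _ => fun β β' => β' = β
  | assign x e => fun β β' => β' x = e β ∧ ∀ y, y ≠ x → β' y = β y
  | constr c => fun β β' => β' = β ∧ β ∈ c

end Action

/-- `Exec β t β'` : the trace `t` has an execution starting in valuation `β`
and ending in valuation `β'`. -/
inductive Exec {Chan Var D : Type} :
    (Var → D) → List (Action Chan Var D) → (Var → D) → Prop where
  | nil (β : Var → D) : Exec β [] β
  | cons {β β' β'' : Var → D} {a : Action Chan Var D} {t : List (Action Chan Var D)} :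
      a.step β β' → Exec β' t β'' → Exec β (a :: t) β''

/-- A trace is feasible if it has an execution. -/
def Feasible {Chan Var D : Type} (t : List (Action Chan Var D)) : Prop :=
  ∃ β β' : Var → D, Exec β t β'

/-- Restriction of a single letter to a sub-alphabet `A`: letters in `A` are
kept; a synchronized pair (that is not itself in `A`) whose read or write
component is in `A` is replaced by that component; all other letters are
dropped. -/
noncomputable def restrictLetter {Chan Var D : Type} (A : Set (Action Chan Var D)) :
    Action Chan Var D → Option (Action Chan Var D)
  | Action.sync c₁ c₂ =>
      if Action.sync c₁ c₂ ∈ A then some (Action.sync c₁ c₂)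
      else if Action.comm c₁ ∈ A then some (Action.comm c₁)
      else if Action.comm c₂ ∈ A then some (Action.comm c₂)
      else none
  | a => if a ∈ A then some a else none

/-- The restriction `t↓A` of a trace `t` to a sub-alphabet `A`. -/
noncomputable def restrict {Chan Var D : Type} (A : Set (Action Chan Var D))
    (t : List (Action Chan Var D)) : List (Action Chan Var D) :=
  t.filterMap (restrictLetter A)

/-- A communicating program: states `Q` with an initial state, a transition
relation labeled by actions, a set of accepting states, an action alphabet,
and a set of program variables. -/
structure Program (Q Chan Var D : Type) where
  init : Q
  tr : Q → Action Chan Var D → Q → Prop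
  acc : Set Q
  alph : Set (Action Chan Var D)
  vars : Set Var

namespace Program

variable {Q Chan Var D : Type}

/-- Well-formedness of a communicating program: transitions are labeled by
alphabet letters, alphabet letters refer only to the program variables, and
the alphabet and the variable set are finite. -/
def Good (M : Program Q Chan Var D) : Prop :=
  (∀ q a q', M.tr q a q' → a ∈ M.alph) ∧
  (∀ a ∈ M.alph, a.usesOnly M.vars) ∧
  M.alph.Finite ∧ M.vars.Finite

/-- `M.Reach q t` : there is a run of `M` from the initial state to `q`
whose induced trace is `t`. -/
inductive Reach (M : Program Q Chan Var D) : Q → List (Action Chan Var D) → Prop where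
  | nil : Reach M M.init []
  | snoc {q : Q} {t : List (Action Chan Var D)} {a : Action Chan Var D} {q' : Q} :
      Reach M q t → M.tr q a q' → Reach M q' (t ++ [a])

/-- `t` is a trace of `M` (induced by some run of `M`). -/
def IsTrace (M : Program Q Chan Var D) (t : List (Action Chan Var D)) : Prop :=
  ∃ q : Q, M.Reach q t

/-- `T(M)`: the set of accepted traces of `M`. -/
def AccTraces (M : Program Q Chan Var D) : Set (List (Action Chan Var D)) :=
  {t | ∃ q ∈ M.acc, M.Reach q t}

/-- The set of channels occurring in actions of `M`. -/
def channels (M : Program Q Chan Var D) : Set Chan :=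
  ⋃ a ∈ M.alph, a.chans

end Program

/-- The interface alphabet of `M₁` and `M₂`: all single communication actions
over channels common to both components. -/
def interface {Q₁ Q₂ Chan Var D : Type}
    (M₁ : Program Q₁ Chan Var D) (M₂ : Program Q₂ Chan Var D) :
    Set (Action Chan Var D) :=
  {a | ∃ c : CommAct Chan Var, a = Action.comm c ∧
      c.chan ∈ M₁.channels ∧ c.chan ∈ M₂.channels}

/-- Transitions of the parallel composition `M₁ ‖ M₂`.  The two components
synchronize on matching read/write interface actions (moving through an
intermediate primed state from which the equality constraint between the two
involved variables is taken), and interleave on all other actions. -/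
inductive ParTrans {Q₁ Q₂ Chan Var D : Type}
    (M₁ : Program Q₁ Chan Var D) (M₂ : Program Q₂ Chan Var D) :
    ((Q₁ × Q₂) ⊕ (Q₁ × Q₂ × Var × Var)) → Action Chan Var D →
    ((Q₁ × Q₂) ⊕ (Q₁ × Q₂ × Var × Var)) → Prop where
  | sync {q₁ p₁ : Q₁} {q₂ p₂ : Q₂} {c₁ c₂ : CommAct Chan Var} :
      Action.comm c₁ ∈ M₁.alph → Action.comm c₁ ∈ interface M₁ M₂ →
      Action.comm c₂ ∈ M₂.alph → Action.comm c₂ ∈ interface M₁ M₂ →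
      rwPair c₁ c₂ →
      M₁.tr q₁ (Action.comm c₁) p₁ → M₂.tr q₂ (Action.comm c₂) p₂ →
      ParTrans M₁ M₂ (Sum.inl (q₁, q₂)) (Action.sync c₁ c₂)
        (Sum.inr (p₁, p₂, c₁.var, c₂.var))
  | eqc {p₁ : Q₁} {p₂ : Q₂} {x₁ x₂ : Var} :
      ParTrans M₁ M₂ (Sum.inr (p₁, p₂, x₁, x₂))
        (Action.constr {β | β x₁ = β x₂}) (Sum.inl (p₁, p₂))
  | left {q₁ p₁ : Q₁} {q₂ : Q₂} {a : Action Chan Var D} :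
      a ∈ M₁.alph → a ∉ interface M₁ M₂ → M₁.tr q₁ a p₁ →
      ParTrans M₁ M₂ (Sum.inl (q₁, q₂)) a (Sum.inl (p₁, q₂))
  | right {q₁ : Q₁} {q₂ p₂ : Q₂} {a : Action Chan Var D} :
      a ∈ M₂.alph → a ∉ interface M₁ M₂ → M₂.tr q₂ a p₂ →
      ParTrans M₁ M₂ (Sum.inl (q₁, q₂)) a (Sum.inl (q₁, p₂))

/-- The parallel composition `M₁ ‖ M₂` of two communicating programs. -/
def parallel {Q₁ Q₂ Chan Var D : Type}
    (M₁ : Program Q₁ Chan Var D) (M₂ : Program Q₂ Chan Var D) :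
    Program ((Q₁ × Q₂) ⊕ (Q₁ × Q₂ × Var × Var)) Chan Var D where
  init := Sum.inl (M₁.init, M₂.init)
  tr := ParTrans M₁ M₂
  acc := {s | ∃ q₁ ∈ M₁.acc, ∃ q₂ ∈ M₂.acc, s = Sum.inl (q₁, q₂)}
  alph :=
    {a | ∃ c₁ c₂ : CommAct Chan Var, a = Action.sync c₁ c₂ ∧
        Action.comm c₁ ∈ M₁.alph ∧ Action.comm c₁ ∈ interface M₁ M₂ ∧
        Action.comm c₂ ∈ M₂.alph ∧ Action.comm c₂ ∈ interface M₁ M₂ ∧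
        rwPair c₁ c₂}
    ∪ ((M₁.alph ∪ M₂.alph) \ interface M₁ M₂)
    ∪ {a | ∃ x₁ ∈ M₁.vars, ∃ x₂ ∈ M₂.vars, a = Action.constr {β | β x₁ = β x₂}}
  vars := M₁.vars ∪ M₂.vars

/-- The interface of `M` and a property `P`: the communication actions common
to both alphabets. -/
def cInterface {QM QP Chan Var D : Type}
    (M : Program QM Chan Var D) (P : Program QP Chan Var D) :
    Set (Action Chan Var D) :=
  {a | a.isComm ∧ a ∈ M.alph ∧ a ∈ P.alph}

/-- Transitions of the conjunctive composition `M × P`: the components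
synchronize on common communication actions and interleave on all other
actions. -/
inductive ConjTrans {QM QP Chan Var D : Type}
    (M : Program QM Chan Var D) (P : Program QP Chan Var D) :
    QM × QP → Action Chan Var D → QM × QP → Prop where
  | sync {q₁ p₁ : QM} {q₂ p₂ : QP} {a : Action Chan Var D} :
      a ∈ cInterface M P → M.tr q₁ a p₁ → P.tr q₂ a p₂ →
      ConjTrans M P (q₁, q₂) a (p₁, p₂)
  | left {q₁ p₁ : QM} {q₂ : QP} {a : Action Chan Var D} :
      a ∈ M.alph → a ∉ cInterface M P → M.tr q₁ a p₁ →
      ConjTrans M P (q₁, q₂) a (p₁, q₂)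
  | right {q₁ : QM} {q₂ p₂ : QP} {a : Action Chan Var D} :
      a ∈ P.alph → a ∉ cInterface M P → P.tr q₂ a p₂ →
      ConjTrans M P (q₁, q₂) a (q₁, p₂)

/-- The conjunctive composition `M × P` of a program and a property; its
accepting states are pairs of an accepting state of `M` and a rejecting
(non-accepting) state of `P`. -/
def conj {QM QP Chan Var D : Type}
    (M : Program QM Chan Var D) (P : Program QP Chan Var D) :
    Program (QM × QP) Chan Var D where
  init := (M.init, P.init)
  tr := ConjTrans M P
  acc := {s | s.1 ∈ M.acc ∧ s.2 ∉ P.acc}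
  alph := M.alph ∪ P.alph
  vars := M.vars

/-- `P` is a property: a deterministic and complete communicating program
without assignment actions.  Semantic determinism: distinct constraints
leaving a state towards distinct successors are mutually contradictory.
Semantic completeness: whenever some constraint leaves a state, the
constraints leaving that state cover all valuations. -/
structure IsProperty {Q Chan Var D : Type} (P : Program Q Chan Var D) : Prop where
  no_assign : ∀ a ∈ P.alph, ¬ a.isAssign
  complete : ∀ q : Q, ∀ a ∈ P.alph, ∃ q' : Q, P.tr q a q'
  deterministic : ∀ (q : Q) (a : Action Chan Var D) (q' q'' : Q),
      P.tr q a q' → P.tr q a q'' → q' = q''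
  sem_det : ∀ (q : Q) (c₁ c₂ : Set (Var → D)) (q' q'' : Q),
      P.tr q (Action.constr c₁) q' → P.tr q (Action.constr c₂) q'' →
      c₁ ≠ c₂ → q' ≠ q'' → c₁ ∩ c₂ = ∅
  sem_complete : ∀ q : Q, (∃ (c : Set (Var → D)) (q' : Q), P.tr q (Action.constr c) q') →
      ∀ β : Var → D, ∃ (c : Set (Var → D)) (q' : Q), P.tr q (Action.constr c) q' ∧ β ∈ c

/-- `M ⊨ P` : the conjunctive composition `M × P` has no feasible accepted
trace. -/
def Sat {QM QP Chan Var D : Type}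
    (M : Program QM Chan Var D) (P : Program QP Chan Var D) : Prop :=
  ∀ t ∈ (conj M P).AccTraces, ¬ Feasible t

/-- `M_w`: the communicating program that follows exactly the trace `w` and
has no other transitions. -/
def traceProgram {Chan Var D : Type} (w : List (Action Chan Var D)) :
    Program (Fin (w.length + 1)) Chan Var D where
  init := 0
  tr := fun i a j => ∃ h : (i : ℕ) < w.length, a = w.get ⟨(i : ℕ), h⟩ ∧ (j : ℕ) = (i : ℕ) + 1
  acc := {Fin.last w.length}
  alph := {a | a ∈ w}
  vars := Set.univ

/-- A language of finite words is regular if it is the language of some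
finite (deterministic) automaton. -/
def IsRegularLang {A : Type} (L : Set (List A)) : Prop :=
  ∃ (σ : Type) (_ : Fintype σ) (M : DFA A σ), ∀ w : List A, w ∈ M.accepts ↔ w ∈ L

/-! The concrete example of a non-regular weakest assumption:
data domain `ℤ`, a single channel (`Unit`), and three variables
`x, y` (of `M₂`) and `z` (of `M₁`). -/

/-- The variables of the example: `x` and `y` belong to `M₂`,
and `z` belongs to `M₁`. -/
inductive V3 : Type
  | x | y | z
deriving DecidableEq

/-- The actions of the example. -/
abbrev Act6 : Type := Action Unit V3 ℤ

/-- The `sync` action on the side of `M₁`: a read over the common channel. -/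
def syncM1 : Act6 := Action.comm (CommAct.read () V3.z)

/-- The `sync` action on the side of `M₂` (and of the assumption):
a write over the common channel. -/
def syncM2 : Act6 := Action.comm (CommAct.write () V3.y)

/-- The synchronized `sync` pair, as it occurs in the parallel composition
and in the property `P`. -/
def syncPair : Act6 := Action.sync (CommAct.read () V3.z) (CommAct.write () V3.y)

/-- The constraint `x = y`. -/
def eqC : Set (V3 → ℤ) := {β | β V3.x = β V3.y}

/-- The constraint `x ≠ y`. -/
def neqC : Set (V3 → ℤ) := {β | β V3.x ≠ β V3.y}

/-- The program `M₁`: states `q₀ = false` (initial) and `q₁ = true`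
(accepting); a transition `q₀ —sync→ q₁` and self-loops on `q₁` labeled by
every letter of its alphabet. -/
def M1ex : Program Bool Unit V3 ℤ where
  init := false
  tr := fun _ a q' => a = syncM1 ∧ q' = true
  acc := {true}
  alph := {syncM1}
  vars := {V3.z}

/-- The alphabet of the property `P`. -/
def PexAlph : Set Act6 := {syncPair, Action.constr eqC, Action.constr neqC}

/-- The property `P`: states `r₀ = 0` (initial, accepting), `r₁ = 1`
(accepting), `r₂ = 2` (accepting), `r₃ = 3` (rejecting); transitions
`r₀ —sync→ r₁`, `r₁ —(x=y)→ r₂`, `r₁ —(x≠y)→ r₃`, and self-loops on `r₂` and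
`r₃` labeled by every letter of its alphabet. -/
def Pex : Program (Fin 4) Unit V3 ℤ where
  init := 0
  tr := fun q a q' =>
    (q = 0 ∧ a = syncPair ∧ q' = 1) ∨
    (q = 1 ∧ a = Action.constr eqC ∧ q' = 2) ∨
    (q = 1 ∧ a = Action.constr neqC ∧ q' = 3) ∨
    (q = 2 ∧ a ∈ PexAlph ∧ q' = 2) ∨
    (q = 3 ∧ a ∈ PexAlph ∧ q' = 3)
  acc := {0, 1, 2}
  vars := Set.univ
  alph := PexAlph

/-- The assignment `x := 0`. -/
def zeroX : Act6 := Action.assign V3.x (fun _ => 0)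

/-- The assignment `y := 0`. -/
def zeroY : Act6 := Action.assign V3.y (fun _ => 0)

/-- The assignment `x := x + 1`. -/
def incX : Act6 := Action.assign V3.x (fun β => β V3.x + 1)

/-- The assignment `y := y + 1`. -/
def incY : Act6 := Action.assign V3.y (fun β => β V3.y + 1)

/-- The alphabet `αM₂ = {x:=0, y:=0, x:=x+1, y:=y+1, sync}`. -/
def alphaM2 : Set Act6 := {zeroX, zeroY, incX, incY, syncM2}

/-!
For `w = u · sync` with `u` a word of assignments, the accepted runs of `(M₁ ‖ w) × P` are those in
which `P` reads the synchronisation and then the constraint `x ≠ y`. The synchronisation writes only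
`z` and constraints write nothing, so `M₁ ‖ w ⊨ P` holds exactly when every execution of `u` ends
with `x = y`. For `u = x:=0 · y:=0 · (x:=x+1)^k · (y:=y+1)^l` this means `k = l`, so the prefixes
`x:=0 · y:=0 · (x:=x+1)^k` have pairwise distinct left quotients and Myhill–Nerode applies.
-/

section Exec

variable {Chan Var D : Type}

theorem exec_nil_iff {β β' : Var → D} : Exec β ([] : List (Action Chan Var D)) β' ↔ β' = β :=
  ⟨fun | .nil _ => rfl, fun h => h ▸ .nil β⟩

theorem exec_cons_iff {a : Action Chan Var D} {t : List (Action Chan Var D)} {β β'' : Var → D} :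
    Exec β (a :: t) β'' ↔ ∃ β', a.step β β' ∧ Exec β' t β'' :=
  ⟨fun | .cons h h' => ⟨_, h, h'⟩, fun ⟨_, h, h'⟩ => .cons h h'⟩

theorem exec_append_iff {s t : List (Action Chan Var D)} {β β'' : Var → D} :
    Exec β (s ++ t) β'' ↔ ∃ γ, Exec β s γ ∧ Exec γ t β'' := by
  induction s generalizing β with
  | nil => simp [exec_nil_iff]
  | cons a s ih => simp only [List.cons_append, exec_cons_iff, ih]; grind

theorem exec_singleton_iff {a : Action Chan Var D} {β β' : Var → D} :
    Exec β [a] β' ↔ a.step β β' := by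
  simp [exec_cons_iff, exec_nil_iff]

theorem Action.step_assign_iff [DecidableEq Var] {v : Var} {e : (Var → D) → D} {β β' : Var → D} :
    (Action.assign v e : Action Chan Var D).step β β' ↔ β' = Function.update β v (e β) := by
  rw [Function.eq_update_iff]; rfl

theorem exec_replicate_increment_iff [DecidableEq Var] (v : Var) (k : ℕ) {β β' : Var → ℤ} :
    Exec β (List.replicate k (Action.assign v (fun γ => γ v + 1) : Action Chan Var ℤ)) β' ↔
      β' = Function.update β v (β v + k) := by
  induction k generalizing β with
  | zero => simp [exec_nil_iff]
  | succ k ih =>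
    simp only [List.replicate_succ, exec_cons_iff, Action.step_assign_iff, ih]
    simp [add_assoc, add_comm (1 : ℤ)]

theorem not_feasible_append {s t : List (Action Chan Var D)} (h : ¬ Feasible s) :
    ¬ Feasible (s ++ t) := by
  rintro ⟨β, β', hst⟩
  obtain ⟨γ, hs, -⟩ := exec_append_iff.mp hst
  exact h ⟨β, γ, hs⟩

def EndsIn (t : List (Action Chan Var D)) (C : Set (Var → D)) : Prop :=
  ∀ β β', Exec β t β' → β' ∈ C

theorem EndsIn.append_singleton {t : List (Action Chan Var D)} {C : Set (Var → D)}
    {a : Action Chan Var D} (ht : EndsIn t C) (ha : ∀ β β', a.step β β' → β ∈ C → β' ∈ C) :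
    EndsIn (t ++ [a]) C := by
  intro β β' h
  obtain ⟨γ, hs, hγ⟩ := exec_append_iff.mp h
  exact ha γ β' (exec_singleton_iff.mp hγ) (ht β γ hs)

theorem EndsIn.append_constr {t : List (Action Chan Var D)} {C c : Set (Var → D)}
    (ht : EndsIn t C) : EndsIn (t ++ [Action.constr c]) C :=
  ht.append_singleton fun _ _ h hC => h.1 ▸ hC

theorem EndsIn.not_feasible_append_constr {t : List (Action Chan Var D)} {C c : Set (Var → D)}
    (ht : EndsIn t C) (hc : Disjoint C c) : ¬ Feasible (t ++ [Action.constr c]) := by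
  rintro ⟨β, β', h⟩
  obtain ⟨γ, hs, hγ⟩ := exec_append_iff.mp h
  obtain ⟨-, hγc⟩ := exec_singleton_iff.mp hγ
  exact hc.notMem_of_mem_left (ht β γ hs) hγc

end Exec

theorem traceProgram_concat_tr {Chan Var D : Type} {u : List (Action Chan Var D)}
    {x a : Action Chan Var D} {i j : Fin ((u ++ [x]).length + 1)}
    (h : (traceProgram (u ++ [x])).tr i a j) :
    (j : ℕ) = i + 1 ∧
      ((∃ hi : (i : ℕ) < u.length, a = u[(i : ℕ)]) ∨ ((i : ℕ) = u.length ∧ a = x)) := by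
  obtain ⟨hlt, rfl, hj⟩ := h
  refine ⟨hj, ?_⟩
  simp only [List.get_eq_getElem, List.getElem_append]
  split_ifs with hi
  · exact .inl ⟨hi, rfl⟩
  · simp at hlt
    exact .inr ⟨by omega, by simp⟩

theorem not_mem_interface_of_isAssign {Q₁ Q₂ Chan Var D : Type} {M₁ : Program Q₁ Chan Var D}
    {M₂ : Program Q₂ Chan Var D} {a : Action Chan Var D} (ha : a.isAssign) :
    a ∉ interface M₁ M₂ := by
  rintro ⟨c, rfl, -⟩
  exact ha

theorem not_mem_cInterface_of_isAssign {QM QP Chan Var D : Type} {M : Program QM Chan Var D}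
    {P : Program QP Chan Var D} {a : Action Chan Var D} (ha : a.isAssign) :
    a ∉ cInterface M P := by
  rintro ⟨hc, -⟩
  cases a <;> simp_all [Action.isComm, Action.isAssign]

def rightState {Q₁ Q₂ Var : Type} : (Q₁ × Q₂) ⊕ (Q₁ × Q₂ × Var × Var) → Q₂ :=
  Sum.elim Prod.snd fun s => s.2.1

theorem not_isRegularLang_of_append_mem_iff {A : Type} {L : Set (List A)} (p s : ℕ → List A)
    (h : ∀ k l, p k ++ s l ∈ L ↔ k = l) : ¬ IsRegularLang L := by
  rintro ⟨σ, hσ, M, hM⟩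
  have hreg : Language.IsRegular (L : Language A) := ⟨σ, hσ, M, Set.ext hM⟩
  have hinj : Function.Injective (Language.leftQuotient (L : Language A) ∘ p) := by
    intro k l hkl
    have hl : s l ∈ Language.leftQuotient L (p l) := (h l l).mpr rfl
    have hk : s l ∈ Language.leftQuotient L (p k) := (congrArg (s l ∈ ·) hkl).mpr hl
    exact (h k l).mp hk
  exact (Set.infinite_range_of_injective hinj).mono (Set.range_comp_subset_range p _)
    hreg.finite_range_leftQuotient

abbrev parEx (u : List Act6) := parallel M1ex (traceProgram (u ++ [syncM2]))

abbrev conjEx (u : List Act6) := conj (parEx u) Pex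

section ParallelComposition

variable {u : List Act6}

theorem comm_mem_interface_parEx (c : CommAct Unit V3) :
    Action.comm c ∈ interface M1ex (traceProgram (u ++ [syncM2])) :=
  ⟨c, rfl, Set.mem_biUnion (x := syncM1) rfl rfl,
    Set.mem_biUnion (x := syncM2) (List.mem_concat_self ..) rfl⟩

theorem mem_cInterface_parEx_iff {a : Act6} : a ∈ cInterface (parEx u) Pex ↔ a = syncPair := by
  constructor
  · rintro ⟨hcomm, -, rfl | rfl | rfl⟩
    · rfl
    all_goals exact hcomm.elim
  · rintro rfl
    exact ⟨trivial, .inl (.inl ⟨_, _, rfl, rfl, comm_mem_interface_parEx _,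
      List.mem_concat_self .., comm_mem_interface_parEx _, rfl⟩), .inl rfl⟩

theorem parEx_tr_cases (hu : ∀ a ∈ u, a.isAssign) {s s'} {a : Act6} (h : (parEx u).tr s a s') :
    (∃ b j x₁ x₂, s = .inr (b, j, x₁, x₂) ∧ a = .constr {β | β x₁ = β x₂} ∧ s' = .inl (b, j)) ∨
    (∃ (b : Bool) (i j : Fin ((u ++ [syncM2]).length + 1)) (hi : (i : ℕ) < u.length),
      s = .inl (b, i) ∧ a = u[(i : ℕ)] ∧ s' = .inl (b, j) ∧ (j : ℕ) = i + 1) ∨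
    (∃ (b : Bool) (i : Fin ((u ++ [syncM2]).length + 1)), (i : ℕ) = u.length ∧ s = .inl (b, i) ∧
      a = syncPair ∧ s' = .inr (true, Fin.last _, V3.z, V3.y)) := by
  rcases h with @⟨q₁, p₁, i, j, c₁, c₂, hc₁, -, -, -, -, ⟨-, rfl⟩, htr⟩ | _ | ⟨rfl, hnot, -⟩ |
    @⟨q₁, i, j, a, -, hnot, htr⟩
  · obtain ⟨hj, ⟨hi, hc₂⟩ | ⟨hi, hc₂⟩⟩ := traceProgram_concat_tr htr
    · exact (hc₂ ▸ hu _ (List.getElem_mem hi) : (Action.comm c₂).isAssign).elim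
    · cases hc₂
      cases hc₁
      refine .inr (.inr ⟨q₁, i, hi, rfl, rfl, ?_⟩)
      simp only [Sum.inr.injEq, Prod.mk.injEq, true_and]
      exact ⟨Fin.ext (by simp [hj, hi]), rfl, rfl⟩
  · exact .inl ⟨_, _, _, _, rfl, rfl, rfl⟩
  · exact absurd (comm_mem_interface_parEx _) hnot
  · obtain ⟨hj, ⟨hi, rfl⟩ | ⟨-, rfl⟩⟩ := traceProgram_concat_tr htr
    · exact .inr (.inl ⟨q₁, i, j, hi, rfl, rfl, rfl, hj⟩)
    · exact absurd (comm_mem_interface_parEx _) hnot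

end ParallelComposition

theorem disjoint_eqC_neqC : Disjoint eqC neqC :=
  Set.disjoint_left.mpr fun _ h h' => h' h

theorem syncPair_preserves_eqC (β β' : V3 → ℤ) (h : syncPair.step β β') (hβ : β ∈ eqC) :
    β' ∈ eqC := by
  obtain ⟨-, h⟩ := h
  show β' V3.x = β' V3.y
  rw [h V3.x nofun, h V3.y nofun]
  exact hβ

section Invariant

variable {u : List Act6}

theorem ne_last_of_le_length {i : Fin ((u ++ [syncM2]).length + 1)} (hi : (i : ℕ) ≤ u.length) :
    i ≠ Fin.last _ := by
  rintro rfl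
  simp at hi

variable (u) in
structure ConjExInv (s : (Bool × Fin ((u ++ [syncM2]).length + 1)) ⊕
      (Bool × Fin ((u ++ [syncM2]).length + 1) × V3 × V3)) (r : Fin 4) (t : List Act6) : Prop where
  start : r = 0 → ∃ b i, s = .inl (b, i) ∧ (i : ℕ) ≤ u.length ∧ t = u.take i
  finished : r ≠ 0 → rightState s = Fin.last _
  balanced : r = 1 ∨ r = 2 → EndsIn t eqC
  infeasible : r = 3 → ¬ Feasible t

variable (hu : ∀ a ∈ u, a.isAssign) {s s'} {r r' : Fin 4} {t : List Act6} {a : Act6}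
include hu

theorem ConjExInv.sync_step (hbal : EndsIn u eqC) (hI : ConjExInv u s r t)
    (hM : (parEx u).tr s syncPair s') (hP : Pex.tr r syncPair r') :
    ConjExInv u s' r' (t ++ [syncPair]) := by
  obtain ⟨_, _, _, _, -, h, -⟩ | ⟨_, i, _, hi, -, h, -⟩ | ⟨b, i, hi, rfl, -, rfl⟩ :=
    parEx_tr_cases hu hM
  · cases h
  · exact (h ▸ hu _ (List.getElem_mem hi) : syncPair.isAssign).elim
  rcases hP with ⟨rfl, -, rfl⟩ | ⟨-, h, -⟩ | ⟨-, h, -⟩ | ⟨rfl, -, rfl⟩ | ⟨rfl, -, rfl⟩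
  · obtain ⟨_, _, he, -, rfl⟩ := hI.start rfl
    cases he
    rw [hi, List.take_length]
    exact ⟨fun h => by simp at h, fun _ => rfl,
      fun _ => hbal.append_singleton syncPair_preserves_eqC, fun h => by simp at h⟩
  · cases h
  · cases h
  all_goals exact absurd (hI.finished (by simp)) (ne_last_of_le_length hi.le)

theorem ConjExInv.left_step (hI : ConjExInv u s r t) (hnot : a ∉ cInterface (parEx u) Pex)
    (hM : (parEx u).tr s a s') : ConjExInv u s' r (t ++ [a]) := by
  obtain ⟨b, j, x₁, x₂, rfl, rfl, rfl⟩ | ⟨b, i, j, hi, rfl, rfl, rfl, hj⟩ | ⟨-, -, -, -, rfl, -⟩ :=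
    parEx_tr_cases hu hM
  · have hr : r ≠ 0 := fun hr => by obtain ⟨_, _, h, -⟩ := hI.start hr; cases h
    exact ⟨fun h => (hr h).elim, hI.finished, fun h => (hI.balanced h).append_constr,
      fun h => not_feasible_append (hI.infeasible h)⟩
  · obtain rfl : r = 0 := by
      by_contra hr
      exact ne_last_of_le_length hi.le (hI.finished hr)
    obtain ⟨_, _, he, -, rfl⟩ := hI.start rfl
    cases he
    refine ⟨fun _ => ⟨b, j, rfl, by omega, ?_⟩, fun h => (h rfl).elim, fun h => by simp at h,
      fun h => by simp at h⟩
    rw [hj, List.take_concat_get' _ _ hi]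
  · exact (hnot (mem_cInterface_parEx_iff.mpr rfl)).elim

omit hu in
theorem ConjExInv.right_step (hI : ConjExInv u s r t) (hnot : a ∉ cInterface (parEx u) Pex)
    (hP : Pex.tr r a r') : ConjExInv u s r' (t ++ [a]) := by
  have ha : a ≠ syncPair := fun h => hnot (mem_cInterface_parEx_iff.mpr h)
  rcases hP with ⟨rfl, h, -⟩ | ⟨rfl, rfl, rfl⟩ | ⟨rfl, rfl, rfl⟩ | ⟨rfl, ha', rfl⟩ | ⟨rfl, -, rfl⟩
  · exact (ha h).elim
  · exact ⟨fun h => by simp at h, fun _ => hI.finished (by simp),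
      fun _ => (hI.balanced (.inl rfl)).append_constr, fun h => by simp at h⟩
  · exact ⟨fun h => by simp at h, fun _ => hI.finished (by simp), fun h => by simp at h,
      fun _ => (hI.balanced (.inl rfl)).not_feasible_append_constr disjoint_eqC_neqC⟩
  · obtain rfl | rfl | rfl := ha'
    · exact (ha rfl).elim
    all_goals exact ⟨fun h => by simp at h, hI.finished,
      fun _ => (hI.balanced (.inr rfl)).append_constr, fun h => by simp at h⟩
  · exact ⟨fun h => by simp at h, hI.finished, fun h => by simp at h,
      fun _ => not_feasible_append (hI.infeasible rfl)⟩

end Invariant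

section Satisfaction

variable {u : List Act6} (hu : ∀ a ∈ u, a.isAssign)
include hu

theorem ConjExInv.of_reach (hbal : EndsIn u eqC) {p : _ × Fin 4} {t : List Act6}
    (h : (conjEx u).Reach p t) : ConjExInv u p.1 p.2 t := by
  induction h with
  | nil =>
    exact ⟨fun _ => ⟨false, 0, rfl, by simp, rfl⟩, fun h => (h rfl).elim,
      fun h => by simp [conj, Pex] at h, fun h => by simp [conj, Pex] at h⟩
  | snoc _ htr ih =>
    cases htr with
    | sync hci hM hP =>
      obtain rfl := mem_cInterface_parEx_iff.mp hci
      exact ih.sync_step hu hbal hM hP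
    | left _ hnot hM => exact ih.left_step hu hnot hM
    | right _ hnot hP => exact ih.right_step hnot hP

theorem sat_parEx_of_endsIn (hbal : EndsIn u eqC) : Sat (parEx u) Pex := by
  rintro t ⟨⟨s, r⟩, ⟨-, hr⟩, hreach⟩
  have hr3 : r = 3 := by
    fin_cases r <;> simp_all [Pex]
  exact (ConjExInv.of_reach hu hbal hreach).infeasible hr3

theorem reach_conjEx_take {i : ℕ} (hi : i ≤ u.length) :
    (conjEx u).Reach (.inl (false, ⟨i, by simp; omega⟩), 0) (u.take i) := by
  induction i with
  | zero => exact .nil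
  | succ i ih =>
    have hlt : i < u.length := hi
    rw [← List.take_concat_get' _ _ hlt]
    have hmem : u[i] ∈ u ++ [syncM2] := List.mem_append_left _ (List.getElem_mem hlt)
    have hassign := hu _ (List.getElem_mem hlt)
    have hnot : u[i] ∉ interface M1ex (traceProgram (u ++ [syncM2])) :=
      not_mem_interface_of_isAssign hassign
    exact .snoc (ih hlt.le) (.left (.inl (.inr ⟨.inr hmem, hnot⟩))
      (not_mem_cInterface_of_isAssign hassign)
      (.right hmem hnot ⟨by simp; omega, by simp [List.getElem_append_left hlt], rfl⟩))

theorem not_sat_parEx_of_exec {β γ : V3 → ℤ} (hexec : Exec β u γ) (hγ : γ ∉ eqC) :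
    ¬ Sat (parEx u) Pex := by
  intro hsat
  have hu₀ := reach_conjEx_take hu le_rfl
  rw [List.take_length] at hu₀
  have hsync : (conjEx u).tr (.inl (false, ⟨u.length, by simp⟩), 0) syncPair
      (.inr (true, Fin.last _, V3.z, V3.y), 1) :=
    .sync (mem_cInterface_parEx_iff.mpr rfl)
      (.sync rfl (comm_mem_interface_parEx _) (List.mem_concat_self ..)
        (comm_mem_interface_parEx _) rfl ⟨rfl, rfl⟩ ⟨by simp, by simp [syncM2], by simp⟩)
      (.inl ⟨rfl, rfl, rfl⟩)
  have hneq : (conjEx u).tr (.inr (true, Fin.last _, V3.z, V3.y), 1) (.constr neqC)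
      (.inr (true, Fin.last _, V3.z, V3.y), 3) :=
    .right (.inr (.inr rfl)) (fun h => nomatch mem_cInterface_parEx_iff.mp h)
      (.inr (.inr (.inl ⟨rfl, rfl, rfl⟩)))
  have heqc : (conjEx u).tr (.inr (true, Fin.last _, V3.z, V3.y), 3)
      (.constr {β | β V3.z = β V3.y}) (.inl (true, Fin.last _), 3) :=
    .left (.inr ⟨V3.z, rfl, V3.y, trivial, rfl⟩) (fun h => nomatch mem_cInterface_parEx_iff.mp h)
      .eqc
  refine hsat _ ⟨_, ⟨⟨true, rfl, Fin.last _, rfl, rfl⟩, by simp [Pex]⟩,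
    .snoc (.snoc (.snoc hu₀ hsync) hneq) heqc⟩ ?_
  simp only [List.append_assoc, List.cons_append, List.nil_append]
  refine ⟨β, Function.update γ V3.z (γ V3.y), exec_append_iff.mpr ⟨γ, hexec,
    .cons ⟨by simp, fun v hv => by simp [hv]⟩ (.cons ⟨rfl, ?_⟩ (.cons ⟨rfl, by simp⟩ (.nil _)))⟩⟩
  simpa [neqC, eqC] using hγ

theorem sat_parEx_iff : Sat (parEx u) Pex ↔ EndsIn u eqC := by
  refine ⟨fun hsat β γ hexec => ?_, sat_parEx_of_endsIn hu⟩
  by_contra hγ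
  exact not_sat_parEx_of_exec hu hexec hγ hsat

end Satisfaction

def assignWord (m n : ℕ) : List Act6 :=
  zeroX :: zeroY :: (List.replicate m incX ++ List.replicate n incY)

theorem isAssign_of_mem_assignWord {m n : ℕ} {a : Act6} (ha : a ∈ assignWord m n) :
    a.isAssign := by
  simp only [assignWord, List.mem_cons, List.mem_append, List.mem_replicate] at ha
  rcases ha with rfl | rfl | ⟨-, rfl⟩ | ⟨-, rfl⟩ <;> trivial

theorem mem_alphaM2_of_mem_assignWord {m n : ℕ} {a : Act6} (ha : a ∈ assignWord m n) :
    a ∈ alphaM2 := by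
  simp only [assignWord, List.mem_cons, List.mem_append, List.mem_replicate] at ha
  rcases ha with rfl | rfl | ⟨-, rfl⟩ | ⟨-, rfl⟩ <;> simp [alphaM2]

theorem endsIn_assignWord_iff {m n : ℕ} : EndsIn (assignWord m n) eqC ↔ m = n := by
  simp only [EndsIn, assignWord, exec_cons_iff, exec_append_iff, zeroX, zeroY, incX, incY,
    Action.step_assign_iff, exec_replicate_increment_iff]
  simp [eqC]

/-- Lemma `weak_non_reg`: the weakest-assumption language
`L(A_w) = { w ∈ (αM₂)* : M₁ ‖ w ⊨ P }` of the example is not regular. -/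
theorem weakest_assumption_not_regular :
    ¬ IsRegularLang {w : List Act6 | (∀ a ∈ w, a ∈ alphaM2) ∧
        Sat (parallel M1ex (traceProgram w)) Pex} := by
  refine not_isRegularLang_of_append_mem_iff (fun k => [zeroX, zeroY] ++ List.replicate k incX)
    (fun l => List.replicate l incY ++ [syncM2]) fun k l => ?_
  have hword : [zeroX, zeroY] ++ List.replicate k incX ++ (List.replicate l incY ++ [syncM2]) =
      assignWord k l ++ [syncM2] := by simp [assignWord]
  have halph : ∀ a ∈ assignWord k l ++ [syncM2], a ∈ alphaM2 :=
    List.forall_mem_append.mpr ⟨fun _ => mem_alphaM2_of_mem_assignWord, by simp [alphaM2]⟩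
  rw [hword, ← endsIn_assignWord_iff, ← sat_parEx_iff fun _ => isAssign_of_mem_assignWord]
  exact and_iff_right halph

end AGR
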